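/- Let d ≥ 1, let M, Q be real d×d matrices, let v, w be symmetric real d×d matrices, and let ψ′₀ be a symmetric solution of the algebraic Riccati equation ψ′₀M + Mᵀψ′₀ − 2ψ′₀QᵀQψ′₀ + v = 0. Assume w − ψ′₀ is invertible and that for every t ∈ [0,T] the matrix (w − ψ′₀)⁻¹ + 2∫₀ᵗ exp((M − 2QᵀQψ′₀)s)·QᵀQ·exp((Mᵀ − 2ψ′₀QᵀQ)s) ds is invertible. Then the function ψ(t) := ψ′₀ + exp((Mᵀ − 2ψ′₀QᵀQ)t)·[(w − ψ′₀)⁻¹ + 2∫₀ᵗ exp((M − 2QᵀQψ′₀)s)·QᵀQ·exp((Mᵀ − 2ψ′₀QᵀQ)s) ds]⁻¹·exp((M − 2QᵀQψ′₀)t) satisfies ψ(0) = w and, for every t ∈ [0,T], ψ is differentiable at t with ψ′(t) = ψ(t)M + Mᵀψ(t) − 2ψ(t)QᵀQψ(t) + v. -/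

import Mathlib

/-! Writing `ψ = ψ'₀ + φ`, the algebraic Riccati equation removes the constant term and leaves
`φ' = Bφ + φA - 2φKφ` with `K = QᵀQ`, `A = M - 2Kψ'₀`, `B = Mᵀ - 2ψ'₀K`. The ansatz
`φ(t) = exp(tB) G(t)⁻¹ exp(tA)` linearises this quadratic equation into `G' = 2 exp(tA) K exp(tB)`,
which is solved by the integral formula for `G`, with `G(0) = (w - ψ'₀)⁻¹` matching `ψ(0) = w`. -/

open Matrix NormedSpace

attribute [local instance] Matrix.linftyOpNormedRing Matrix.linftyOpNormedAlgebra

theorem HasDerivAt.ringInverse {𝕜 R : Type*} [NontriviallyNormedField 𝕜] [NormedRing R]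
    [HasSummableGeomSeries R] [NormedAlgebra 𝕜 R] {f : 𝕜 → R} {f' : R} {t : 𝕜}
    (hf : HasDerivAt f f' t) (ht : IsUnit (f t)) :
    HasDerivAt (fun s => Ring.inverse (f s))
      (-(Ring.inverse (f t) * f' * Ring.inverse (f t))) t := by
  obtain ⟨u, hu⟩ := ht
  have hinv := hasFDerivAt_ringInverse (𝕜 := 𝕜) u
  rw [← Ring.inverse_unit, hu] at hinv
  exact hinv.comp_hasDerivAt t hf

theorem hasDerivAt_integral_exp_mul_mul_exp {𝔸 : Type*} [NormedRing 𝔸] [NormedAlgebra ℝ 𝔸]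
    [NormedAlgebra ℚ 𝔸] [CompleteSpace 𝔸] (A K B : 𝔸) (a t : ℝ) :
    HasDerivAt (fun u => ∫ s in a..u, exp (s • A) * K * exp (s • B))
      (exp (t • A) * K * exp (t • B)) t := by
  have hcont : Continuous fun s : ℝ => exp (s • A) * K * exp (s • B) := by fun_prop
  exact (hcont.integral_hasStrictDerivAt a t).hasDerivAt

theorem riccati_add_eq {R : Type*} [Ring R] [Algebra ℝ R] {M N K v ψ₀ : R}
    (h : ψ₀ * M + N * ψ₀ - (2:ℝ) • (ψ₀ * K * ψ₀) + v = 0) (φ : R) :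
    (ψ₀ + φ) * M + N * (ψ₀ + φ) - (2:ℝ) • ((ψ₀ + φ) * K * (ψ₀ + φ)) + v =
      (N - (2:ℝ) • (ψ₀ * K)) * φ + φ * (M - (2:ℝ) • (K * ψ₀)) - φ * ((2:ℝ) • K) * φ := by
  rw [eq_neg_of_add_eq_zero_right h]
  simp only [two_smul]
  noncomm_ring

section Matrix

variable {n : Type*} [Fintype n] [DecidableEq n]

theorem HasDerivAt.matrix_inv {G : ℝ → Matrix n n ℝ} {G' : Matrix n n ℝ} {t : ℝ}
    (hG : HasDerivAt G G' t) (ht : IsUnit (G t)) :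
    HasDerivAt (fun s => (G s)⁻¹) (-((G t)⁻¹ * G' * (G t)⁻¹)) t := by
  have hinv := hG.ringInverse ht
  simp only [← nonsing_inv_eq_ringInverse] at hinv
  exact hinv

theorem hasDerivAt_exp_mul_inv_mul_exp (A B K : Matrix n n ℝ) {G : ℝ → Matrix n n ℝ} {t : ℝ}
    (hG : HasDerivAt G (exp (t • A) * K * exp (t • B)) t) (ht : IsUnit (G t)) :
    HasDerivAt (fun s => exp (s • B) * (G s)⁻¹ * exp (s • A))
      (B * (exp (t • B) * (G t)⁻¹ * exp (t • A)) + exp (t • B) * (G t)⁻¹ * exp (t • A) * A -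
        exp (t • B) * (G t)⁻¹ * exp (t • A) * K * (exp (t • B) * (G t)⁻¹ * exp (t • A))) t := by
  set EA := exp (t • A)
  set EB := exp (t • B)
  -- stated apart so that `noncomm_ring` sees the plain ring structure on matrices, not the
  -- `linftyOpNormedRing` one carried by the derivative
  have hprod : (B * EB * (G t)⁻¹ + EB * -((G t)⁻¹ * (EA * K * EB) * (G t)⁻¹)) * EA +
      EB * (G t)⁻¹ * (EA * A) =
      B * (EB * (G t)⁻¹ * EA) + EB * (G t)⁻¹ * EA * A -
        EB * (G t)⁻¹ * EA * K * (EB * (G t)⁻¹ * EA) := by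
    noncomm_ring
  exact (((hasDerivAt_exp_smul_const' B t).mul (hG.matrix_inv ht)).mul
    (hasDerivAt_exp_smul_const A t)).congr_deriv hprod

end Matrix

theorem stmt_4_general (d : ℕ) (T : ℝ)
    (M Q v w ψ'₀ : Matrix (Fin d) (Fin d) ℝ)
    (hARE : ψ'₀ * M + Mᵀ * ψ'₀ - (2:ℝ) • (ψ'₀ * (Qᵀ * Q) * ψ'₀) + v = 0)
    (hwψ : IsUnit (w - ψ'₀))
    (G : ℝ → Matrix (Fin d) (Fin d) ℝ)
    (hG : ∀ t, G t = (w - ψ'₀)⁻¹ +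
      (2:ℝ) • ∫ s in (0:ℝ)..t,
        exp (s • (M - (2:ℝ) • ((Qᵀ * Q) * ψ'₀))) * (Qᵀ * Q) *
          exp (s • (Mᵀ - (2:ℝ) • (ψ'₀ * (Qᵀ * Q)))))
    (hGinv : ∀ t ∈ Set.Icc (0:ℝ) T, IsUnit (G t))
    (ψ : ℝ → Matrix (Fin d) (Fin d) ℝ)
    (hψ : ∀ t, ψ t = ψ'₀ +
      exp (t • (Mᵀ - (2:ℝ) • (ψ'₀ * (Qᵀ * Q)))) * (G t)⁻¹ *
        exp (t • (M - (2:ℝ) • ((Qᵀ * Q) * ψ'₀)))) :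
    ψ 0 = w ∧ ∀ t ∈ Set.Icc (0:ℝ) T,
      HasDerivAt ψ (ψ t * M + Mᵀ * ψ t - (2:ℝ) • (ψ t * (Qᵀ * Q) * ψ t) + v) t := by
  set K := Qᵀ * Q
  set A := M - (2:ℝ) • (K * ψ'₀)
  set B := Mᵀ - (2:ℝ) • (ψ'₀ * K)
  refine ⟨?_, fun t ht => ?_⟩
  · rw [hψ, hG, intervalIntegral.integral_same, smul_zero, add_zero, zero_smul, zero_smul,
      exp_zero, one_mul, mul_one, nonsing_inv_nonsing_inv _ ((isUnit_iff_isUnit_det _).mp hwψ),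
      add_sub_cancel]
  · have hGt : HasDerivAt G (exp (t • A) * ((2:ℝ) • K) * exp (t • B)) t := by
      rw [funext hG, mul_smul_comm, smul_mul_assoc]
      exact ((hasDerivAt_integral_exp_mul_mul_exp A K B 0 t).const_smul (2:ℝ)).const_add _
    rw [hψ t, riccati_add_eq hARE, funext hψ]
    exact (hasDerivAt_exp_mul_inv_mul_exp A B _ hGt (hGinv t ht)).const_add ψ'₀

theorem stmt_4 (d : ℕ) (hd : 1 ≤ d) (T : ℝ) (hT : 0 < T)
    (M Q v w ψ'₀ : Matrix (Fin d) (Fin d) ℝ)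
    (hv : v.IsSymm) (hw : w.IsSymm) (hψ'₀ : ψ'₀.IsSymm)
    (hARE : ψ'₀ * M + Mᵀ * ψ'₀ - (2:ℝ) • (ψ'₀ * (Qᵀ * Q) * ψ'₀) + v = 0)
    (hwψ : IsUnit (w - ψ'₀))
    (G : ℝ → Matrix (Fin d) (Fin d) ℝ)
    (hG : ∀ t, G t = (w - ψ'₀)⁻¹ +
      (2:ℝ) • ∫ s in (0:ℝ)..t,
        exp (s • (M - (2:ℝ) • ((Qᵀ * Q) * ψ'₀))) * (Qᵀ * Q) *
          exp (s • (Mᵀ - (2:ℝ) • (ψ'₀ * (Qᵀ * Q)))))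
    (hGinv : ∀ t ∈ Set.Icc (0:ℝ) T, IsUnit (G t))
    (ψ : ℝ → Matrix (Fin d) (Fin d) ℝ)
    (hψ : ∀ t, ψ t = ψ'₀ +
      exp (t • (Mᵀ - (2:ℝ) • (ψ'₀ * (Qᵀ * Q)))) * (G t)⁻¹ *
        exp (t • (M - (2:ℝ) • ((Qᵀ * Q) * ψ'₀)))) :
    ψ 0 = w ∧ ∀ t ∈ Set.Icc (0:ℝ) T,
      HasDerivAt ψ (ψ t * M + Mᵀ * ψ t - (2:ℝ) • (ψ t * (Qᵀ * Q) * ψ t) + v) t :=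
  stmt_4_general d T M Q v w ψ'₀ hARE hwψ G hG hGinv ψ hψ
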